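/- Every AL-monoid is ptolemaic: for all a,b,c,d, (a*b)∧(c*d) ≤ (a*c)∧(b*d) + (a*d)∧(b*c), and the analogous inequalities hold for the other two pairings of opposite sides. -/
import Mathlib


/-- An Autometrized lattice ordered monoid (AL-monoid). -/
class ALMonoid (A : Type*) extends Lattice A, AddCommMonoid A where
  amul : A → A → A
  add_le_add_left' : ∀ a b : A, a ≤ b → ∀ c : A, c + a ≤ c + b
  amul_core : ∀ a b : A, amul a (a ⊓ b) + b = a ⊔ b
  add_contract : ∀ a x y : A, amul (a + x) (a + y) ≤ amul x y
  sup_contract : ∀ a x y : A, amul (a ⊔ x) (a ⊔ y) ≤ amul x y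
  inf_contract : ∀ a x y : A, amul (a ⊓ x) (a ⊓ y) ≤ amul x y
  amul_contract : ∀ a x y : A, amul (amul a x) (amul a y) ≤ amul x y
  inf_amul_sup : ∀ a b : A, amul a (a ⊔ b) ⊓ amul b (a ⊔ b) = 0
  amul_nonneg : ∀ a b : A, 0 ≤ amul a b
  amul_eq_zero_iff : ∀ a b : A, amul a b = 0 ↔ a = b
  amul_comm : ∀ a b : A, amul a b = amul b a
  amul_triangle : ∀ a b c : A, amul a b ≤ amul a c + amul c b

open ALMonoid

infixl:70 " ⋆ " => ALMonoid.amul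

private lemma key {A : Type*} [ALMonoid A]
    (haddinf : ∀ x y z : A, x + (y ⊓ z) = (x + y) ⊓ (x + z))
    (p q x y z w : A)
    (h1 : p ≤ x + w) (h2 : p ≤ z + y) (h3 : q ≤ x + z) (h4 : q ≤ w + y) :
    p ⊓ q ≤ x ⊓ y + z ⊓ w := by
  have key : x ⊓ y + z ⊓ w = ((x + z) ⊓ (x + w)) ⊓ ((y + z) ⊓ (y + w)) := by
    rw [add_comm (x ⊓ y), haddinf, add_comm (z ⊓ w) x, add_comm (z ⊓ w) y,
      haddinf, haddinf]
  rw [key]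
  refine le_inf (le_inf ?_ ?_) (le_inf ?_ ?_) <;>
    [exact le_trans inf_le_right h3;
     exact le_trans inf_le_left h1;
     exact le_trans inf_le_left (h2.trans_eq (add_comm _ _));
     exact le_trans inf_le_right (h4.trans_eq (add_comm _ _))]

theorem stmt11 {A : Type*} [ALMonoid A]
    (hdistrib : ∀ x y z : A, x ⊔ (y ⊓ z) = (x ⊔ y) ⊓ (x ⊔ z))
    (haddinf : ∀ x y z : A, x + (y ⊓ z) = (x + y) ⊓ (x + z))
    (a b c d : A) :
    (a ⋆ b) ⊓ (c ⋆ d) ≤ (a ⋆ c) ⊓ (b ⋆ d) + (a ⋆ d) ⊓ (b ⋆ c) ∧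
    (a ⋆ c) ⊓ (b ⋆ d) ≤ (a ⋆ b) ⊓ (c ⋆ d) + (a ⋆ d) ⊓ (c ⋆ b) ∧
    (a ⋆ d) ⊓ (b ⋆ c) ≤ (a ⋆ c) ⊓ (d ⋆ b) + (a ⋆ b) ⊓ (c ⋆ d) := by
  have tri : ∀ x y z : A, x ⋆ y ≤ x ⋆ z + z ⋆ y := amul_triangle
  have comm : ∀ x y : A, x ⋆ y = y ⋆ x := amul_comm
  refine ⟨key haddinf _ _ _ _ _ _ ?_ ?_ ?_ ?_,
          key haddinf _ _ _ _ _ _ ?_ ?_ ?_ ?_,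
          key haddinf _ _ _ _ _ _ ?_ ?_ ?_ ?_⟩
  · exact (tri a b c).trans_eq (by rw [comm c b])
  · exact (tri a b d).trans_eq (by rw [comm d b])
  · exact (tri c d a).trans_eq (by rw [comm c a])
  · exact (tri c d b).trans_eq (by rw [comm c b])
  · exact (tri a c b).trans_eq (by rw [comm b c])
  · exact (tri a c d).trans_eq (by rw [comm d c])
  · exact (tri b d a).trans_eq (by rw [comm b a])
  · exact (tri b d c).trans_eq (by rw [comm b c])
  · exact tri a d c
  · exact (tri a d b).trans_eq (by rw [comm b d])
  · exact (tri b c a).trans_eq (by rw [comm b a]; rw [add_comm])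
  · exact (tri b c d).trans_eq (by rw [comm b d, comm d c, add_comm])
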